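/- A G-graded commutative ring R is a Gelfand graded ring if and only if for any two disjoint Zariski closed subsets F, F' of GSpec(R) there exists r ∈ R such that the image of r in the localization R_P is 0 for all P ∈ F and is 1 for all P ∈ F' (equivalently: for each P ∈ F there is a ∈ h(R)\P with ra = 0, and for each P ∈ F' there is b ∈ h(R)\P with (r−1)b = 0). -/

import Mathlib

section GradedGelfand

variable {G : Type*} [AddGroup G] [DecidableEq G] {R : Type*} [CommRing R]
variable (𝒜 : G → AddSubgroup R) [GradedRing 𝒜]

/-- A homogeneous (graded) prime ideal: a proper graded ideal that is prime
with respect to homogeneous elements. -/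
def IsGradedPrime (P : Ideal R) : Prop :=
  P.IsHomogeneous 𝒜 ∧ P ≠ ⊤ ∧
    ∀ a b : R, SetLike.IsHomogeneousElem 𝒜 a → SetLike.IsHomogeneousElem 𝒜 b →
      a * b ∈ P → a ∈ P ∨ b ∈ P

/-- A graded maximal ideal: a proper graded ideal maximal among proper graded ideals. -/
def IsGradedMaximal (M : Ideal R) : Prop :=
  M.IsHomogeneous 𝒜 ∧ M ≠ ⊤ ∧
    ∀ J : Ideal R, J.IsHomogeneous 𝒜 → M ≤ J → J ≠ ⊤ → J = M

/-- The homogeneous prime spectrum of a graded ring. -/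
def GSpec := { P : Ideal R // IsGradedPrime 𝒜 P }

/-- The Zariski topology on the homogeneous prime spectrum, generated by the basic
open sets `D_G(r)` for homogeneous `r`; the closed sets are exactly the `V_G(I)`
for graded ideals `I`. -/
instance : TopologicalSpace (GSpec 𝒜) :=
  TopologicalSpace.generateFrom
    { U | ∃ r : R, SetLike.IsHomogeneousElem 𝒜 r ∧ U = { P : GSpec 𝒜 | r ∉ P.1 } }

/-- The set of graded maximal ideals inside the homogeneous prime spectrum. -/
def GMax : Set (GSpec 𝒜) := { P | IsGradedMaximal 𝒜 P.1 }

/-- A Gelfand graded ring: every homogeneous prime ideal is contained in a unique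
graded maximal ideal. -/
def IsGelfandGraded : Prop :=
  ∀ P : Ideal R, IsGradedPrime 𝒜 P →
    ∃! M : Ideal R, IsGradedMaximal 𝒜 M ∧ P ≤ M

/-- A pm⁺ graded ring: for every homogeneous prime `P`, the homogeneous primes
containing `P` form a chain. -/
def IsPMPlusGraded : Prop :=
  ∀ P Q Q' : Ideal R, IsGradedPrime 𝒜 P → IsGradedPrime 𝒜 Q → IsGradedPrime 𝒜 Q' →
    P ≤ Q → P ≤ Q' → Q ≤ Q' ∨ Q' ≤ Q

end GradedGelfand

/-!
Write `O_F` for the ideal of those `r` with `r(P) = 0` for every `P ∈ F`. In a Gelfand graded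
ring two distinct graded maximal ideals `M ≠ N` are separated by homogeneous `a ∉ M`, `b ∉ N`
with `a * b = 0`: otherwise Zorn's lemma gives a graded prime avoiding all such products, which
then lies below both `M` and `N`. Since closed sets are stable under specialization and `GSpec`
is quasi-compact, finitely many such separations show that for a graded maximal `M ∉ F` some
homogeneous `b ∉ M` lies in `O_F`. Hence no graded maximal ideal contains `O_F + O_F'` for
disjoint closed `F`, `F'`, so `1 = y + x` with `y ∈ O_F`, `x ∈ O_F'`, and `r = y` works.
Conversely, if `P` lies below graded maximal `M ≠ N`, separating the closed points `N`, `M`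
by `r` gives `a ∉ N`, `b ∉ M` with `r * a = 0 = (r - 1) * b`, so `a * b = 0 ∈ P`.
-/

section GradedIdeals

variable {G : Type*} [AddGroup G] [DecidableEq G] {R : Type*} [CommRing R]
variable {𝒜 : G → AddSubgroup R} [GradedRing 𝒜]

theorem Ideal.IsHomogeneous.le_of_forall_isHomogeneousElem {I J : Ideal R}
    (hI : I.IsHomogeneous 𝒜) (h : ∀ x, SetLike.IsHomogeneousElem 𝒜 x → x ∈ I → x ∈ J) :
    I ≤ J := by
  rw [← hI.toIdeal_homogeneousCore_eq_self]
  exact Ideal.span_le.2 fun _ ⟨⟨x, hx⟩, hxI, hx'⟩ => hx' ▸ h x hx hxI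

theorem isGradedPrime_of_maximal_disjoint {S : Submonoid R} {P : Ideal R}
    (hP : P.IsHomogeneous 𝒜) (hPS : ∀ s ∈ S, s ∉ P)
    (hmax : ∀ J : Ideal R, J.IsHomogeneous 𝒜 → P ≤ J → (∀ s ∈ S, s ∉ J) → J = P) :
    IsGradedPrime 𝒜 P := by
  refine ⟨hP, fun h => hPS 1 S.one_mem (h ▸ Submodule.mem_top), fun a b ha hb hab => ?_⟩
  by_contra! hnot
  have meets (x : R) (hx : SetLike.IsHomogeneousElem 𝒜 x) (hxP : x ∉ P) :
      ∃ s ∈ S, s ∈ P ⊔ Ideal.span {x} := by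
    by_contra! hdisj
    have hJ := hP.sup (Ideal.homogeneous_span 𝒜 {x} (by simpa))
    exact hxP (hmax _ hJ le_sup_left hdisj ▸
      Ideal.mem_sup_right (Ideal.mem_span_singleton_self x))
  obtain ⟨s, hs, hsa⟩ := meets a ha hnot.1
  obtain ⟨t, ht, htb⟩ := meets b hb hnot.2
  have hprod : (P ⊔ Ideal.span {a}) * (P ⊔ Ideal.span {b}) ≤ P := by
    rw [Ideal.sup_mul, Ideal.mul_sup, Ideal.mul_sup, Ideal.span_singleton_mul_span_singleton]
    exact sup_le (sup_le Ideal.mul_le_left Ideal.mul_le_left)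
      (sup_le Ideal.mul_le_right ((Ideal.span_singleton_le_iff_mem P).2 hab))
  exact hPS _ (S.mul_mem hs ht) (hprod (Ideal.mul_mem_mul hsa htb))

theorem exists_le_maximal_homogeneous_disjoint (S : Submonoid R) {I : Ideal R}
    (hI : I.IsHomogeneous 𝒜) (hIS : ∀ s ∈ S, s ∉ I) :
    ∃ P : Ideal R, P.IsHomogeneous 𝒜 ∧ I ≤ P ∧ (∀ s ∈ S, s ∉ P) ∧
      ∀ J : Ideal R, J.IsHomogeneous 𝒜 → P ≤ J → (∀ s ∈ S, s ∉ J) → J = P := by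
  obtain ⟨P, hIP, ⟨hP, hPS⟩, hPmax⟩ :=
    zorn_le_nonempty₀ { J : Ideal R | J.IsHomogeneous 𝒜 ∧ ∀ s ∈ S, s ∉ J }
      (fun c hc hchain J hJ => by
        refine ⟨sSup c, ⟨Ideal.IsHomogeneous.sSup fun K hK => (hc hK).1, ?_⟩,
          fun K hK => le_sSup hK⟩
        intro s hs hsc
        obtain ⟨K, hKc, hsK⟩ :=
          (Submodule.mem_sSup_of_directed ⟨J, hJ⟩ hchain.directedOn).1 hsc
        exact (hc hKc).2 s hs hsK)
      I ⟨hI, hIS⟩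
  exact ⟨P, hP, hIP, hPS, fun J hJ hPJ hJS => le_antisymm (hPmax ⟨hJ, hJS⟩ hPJ) hPJ⟩

theorem IsGradedMaximal.isGradedPrime {M : Ideal R} (hM : IsGradedMaximal 𝒜 M) :
    IsGradedPrime 𝒜 M :=
  isGradedPrime_of_maximal_disjoint (S := ⊥) hM.1
    (fun _ hs => (Submonoid.mem_bot.1 hs) ▸ (Ideal.ne_top_iff_one M).1 hM.2.1)
    fun J hJ hMJ hJ1 =>
      hM.2.2 J hJ hMJ ((Ideal.ne_top_iff_one J).2 (hJ1 1 (Submonoid.one_mem _)))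

theorem exists_isGradedMaximal_le {I : Ideal R} (hI : I.IsHomogeneous 𝒜) (hne : I ≠ ⊤) :
    ∃ M : Ideal R, IsGradedMaximal 𝒜 M ∧ I ≤ M := by
  obtain ⟨M, hM, hIM, hM1, hMmax⟩ := exists_le_maximal_homogeneous_disjoint ⊥ hI
    fun _ hs => (Submonoid.mem_bot.1 hs) ▸ (Ideal.ne_top_iff_one I).1 hne
  refine ⟨M, ⟨hM, (Ideal.ne_top_iff_one M).2 (hM1 1 (Submonoid.one_mem _)), ?_⟩, hIM⟩
  exact fun J hJ hMJ hJne =>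
    hMmax J hJ hMJ fun _ hs => (Submonoid.mem_bot.1 hs) ▸ (Ideal.ne_top_iff_one J).1 hJne

end GradedIdeals

namespace GSpec

variable {G : Type*} [AddGroup G] [DecidableEq G] {R : Type*} [CommRing R]
variable {𝒜 : G → AddSubgroup R} [GradedRing 𝒜]

theorem exists_le_mem_gMax (P : GSpec 𝒜) : ∃ M ∈ GMax 𝒜, P.1 ≤ M.1 :=
  let ⟨M, hM, hPM⟩ := exists_isGradedMaximal_le P.2.1 P.2.2.1
  ⟨⟨M, hM.isGradedPrime⟩, hM, hPM⟩

theorem span_eq_top_of_forall_mem_gMax {T : Set R}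
    (hT : ∀ x ∈ T, SetLike.IsHomogeneousElem 𝒜 x) (h : ∀ M ∈ GMax 𝒜, ∃ r ∈ T, r ∉ M.1) :
    Ideal.span T = ⊤ := by
  by_contra hne
  obtain ⟨M, hM, hTM⟩ := exists_isGradedMaximal_le (Ideal.homogeneous_span 𝒜 T hT) hne
  obtain ⟨r, hrT, hrM⟩ := h ⟨M, hM.isGradedPrime⟩ hM
  exact hrM (hTM (Ideal.subset_span hrT))

variable (𝒜) in
def basicOpen (r : R) : Set (GSpec 𝒜) := {P | r ∉ P.1}

theorem isOpen_basicOpen {r : R} (hr : SetLike.IsHomogeneousElem 𝒜 r) :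
    IsOpen (basicOpen 𝒜 r) :=
  TopologicalSpace.isOpen_generateFrom_of_mem ⟨r, hr, rfl⟩

theorem specializes_of_le {P Q : GSpec 𝒜} (hle : P.1 ≤ Q.1) : P ⤳ Q := by
  refine specializes_iff_forall_open.2 fun U hU hQ => ?_
  induction hU with
  | basic U hU =>
    obtain ⟨r, -, rfl⟩ := hU
    exact fun h => hQ (hle h)
  | univ => trivial
  | inter U V _ _ hU hV => exact ⟨hU hQ.1, hV hQ.2⟩
  | sUnion 𝒰 _ h𝒰 =>
    obtain ⟨U, hU, hQU⟩ := hQ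
    exact ⟨U, hU, h𝒰 U hU hQU⟩

theorem isClosed_singleton_of_mem_gMax {M : GSpec 𝒜} (hM : M ∈ GMax 𝒜) : IsClosed {M} := by
  refine isOpen_compl_iff.1 (isOpen_iff_forall_mem_open.2 fun Q hQ => ?_)
  obtain ⟨r, hr, hrM, hrQ⟩ : ∃ r, SetLike.IsHomogeneousElem 𝒜 r ∧ r ∈ M.1 ∧ r ∉ Q.1 := by
    by_contra! h
    exact hQ (Subtype.ext (hM.2.2 Q.1 Q.2.1 (hM.1.le_of_forall_isHomogeneousElem h) Q.2.2.1))
  exact ⟨basicOpen 𝒜 r, fun P hP (hPM : P = M) => hP (hPM ▸ hrM), isOpen_basicOpen hr, hrQ⟩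

instance : CompactSpace (GSpec 𝒜) := by
  refine compactSpace_generateFrom rfl fun 𝒰 h𝒰 hcov => ?_
  set T := {r : R | SetLike.IsHomogeneousElem 𝒜 r ∧ basicOpen 𝒜 r ∈ 𝒰}
  have hT : Ideal.span T = ⊤ := span_eq_top_of_forall_mem_gMax (fun r hr => hr.1) fun M _ => by
    obtain ⟨U, hU, hMU⟩ := Set.mem_sUnion.1 (hcov ▸ Set.mem_univ M)
    obtain ⟨r, hr, rfl⟩ := h𝒰 hU
    exact ⟨r, ⟨hr, hU⟩, hMU⟩
  obtain ⟨T₀, hT₀, hT₀top⟩ := (Ideal.span_eq_top_iff_finite T).1 hT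
  refine ⟨basicOpen 𝒜 '' T₀, Set.image_subset_iff.2 fun r hr => (hT₀ hr).2,
    T₀.finite_toSet.image _, Set.eq_univ_of_forall fun P => ?_⟩
  by_contra! hP
  refine P.2.2.1 (Ideal.eq_top_iff_one _ |>.2 ?_)
  exact Ideal.span_le.2 (fun r hr => by_contra fun hrP => hP ⟨_, ⟨r, hr, rfl⟩, hrP⟩)
    (hT₀top ▸ Submodule.mem_top)

/-- `R_P` is the localization at this submonoid `h(R) \ P`. -/
def homogeneousCompl (P : GSpec 𝒜) : Submonoid R where
  carrier := {a | SetLike.IsHomogeneousElem 𝒜 a ∧ a ∉ P.1}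
  mul_mem' ha hb := ⟨ha.1.mul hb.1, fun h => (P.2.2.2 _ _ ha.1 hb.1 h).elim ha.2 hb.2⟩
  one_mem' := ⟨SetLike.isHomogeneousElem_one 𝒜, (Ideal.ne_top_iff_one _).1 P.2.2.1⟩

def locallyZeroIdeal (F : Set (GSpec 𝒜)) : Ideal R :=
  ⨅ P ∈ F, RingHom.ker (algebraMap R (Localization P.homogeneousCompl))

theorem mem_locallyZeroIdeal {F : Set (GSpec 𝒜)} {r : R} :
    r ∈ locallyZeroIdeal F ↔
      ∀ P ∈ F, ∃ a : R, SetLike.IsHomogeneousElem 𝒜 a ∧ a ∉ P.1 ∧ r * a = 0 := by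
  simp only [locallyZeroIdeal, Submodule.mem_iInf, RingHom.mem_ker]
  refine forall₂_congr fun P _ => (IsLocalization.map_eq_zero_iff P.homogeneousCompl _ r).trans
    ⟨fun ⟨⟨a, ha, haP⟩, h⟩ => ⟨a, ha, haP, by rwa [mul_comm]⟩,
      fun ⟨a, ha, haP, h⟩ => ⟨⟨a, ha, haP⟩, by rwa [mul_comm]⟩⟩

theorem exists_mul_eq_zero_of_ne (hGel : IsGelfandGraded 𝒜) {M N : GSpec 𝒜} (hM : M ∈ GMax 𝒜)
    (hN : N ∈ GMax 𝒜) (hMN : M ≠ N) :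
    ∃ a ∈ M.homogeneousCompl, ∃ b ∈ N.homogeneousCompl, a * b = 0 := by
  by_contra! h
  obtain ⟨P, hP, -, hPS, hPmax⟩ := exists_le_maximal_homogeneous_disjoint
    (M.homogeneousCompl ⊔ N.homogeneousCompl) (Ideal.IsHomogeneous.bot 𝒜) fun s hs hs0 => by
      obtain ⟨a, ha, b, hb, rfl⟩ := Submonoid.mem_sup.1 hs
      exact h a ha b hb (Ideal.mem_bot.1 hs0)
  have hPprime := isGradedPrime_of_maximal_disjoint hP hPS hPmax
  have le_of_le_sup {Q : GSpec 𝒜}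
      (hQ : Q.homogeneousCompl ≤ M.homogeneousCompl ⊔ N.homogeneousCompl) : P ≤ Q.1 :=
    hP.le_of_forall_isHomogeneousElem fun x hx hxP =>
      by_contra fun hxQ => hPS x (hQ ⟨hx, hxQ⟩) hxP
  obtain ⟨_, -, huniq⟩ := hGel P hPprime
  exact hMN (Subtype.ext ((huniq M.1 ⟨hM, le_of_le_sup le_sup_left⟩).trans
    (huniq N.1 ⟨hN, le_of_le_sup le_sup_right⟩).symm))

theorem exists_notMem_mem_locallyZeroIdeal (hGel : IsGelfandGraded 𝒜) {F : Set (GSpec 𝒜)}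
    (hF : IsClosed F) {M : GSpec 𝒜} (hM : M ∈ GMax 𝒜) (hMF : M ∉ F) :
    ∃ b ∈ M.homogeneousCompl, b ∈ locallyZeroIdeal F := by
  have hsep : ∀ P : F, ∃ a ∈ P.1.homogeneousCompl, ∃ b ∈ M.homogeneousCompl, a * b = 0 := by
    rintro ⟨P, hP⟩
    obtain ⟨N, hN, hPN⟩ := exists_le_mem_gMax P
    obtain ⟨a, ha, b, hb, hab⟩ := exists_mul_eq_zero_of_ne hGel hN hM
      (by rintro rfl; exact hMF ((specializes_of_le hPN).mem_closed hF hP))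
    exact ⟨a, ⟨ha.1, fun h => ha.2 (hPN h)⟩, b, hb, hab⟩
  choose a ha b hb hab using hsep
  obtain ⟨t, hcov⟩ := hF.isCompact.elim_finite_subcover (fun P => basicOpen 𝒜 (a P))
    (fun P => isOpen_basicOpen (ha P).1)
    fun P hP => Set.mem_iUnion.2 ⟨⟨P, hP⟩, (ha ⟨P, hP⟩).2⟩
  refine ⟨∏ P ∈ t, b P, prod_mem fun P _ => hb P, mem_locallyZeroIdeal.2 fun Q hQ => ?_⟩
  obtain ⟨P, hPt, hQP⟩ := Set.mem_iUnion₂.1 (hcov hQ)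
  refine ⟨a P, (ha P).1, hQP, ?_⟩
  obtain ⟨c, hc⟩ := Finset.dvd_prod_of_mem b hPt
  rw [hc]
  linear_combination c * hab P

theorem locallyZeroIdeal_sup_eq_top (hGel : IsGelfandGraded 𝒜) {F F' : Set (GSpec 𝒜)}
    (hF : IsClosed F) (hF' : IsClosed F') (hd : Disjoint F F') :
    locallyZeroIdeal F ⊔ locallyZeroIdeal F' = ⊤ := by
  set T := {r : R | SetLike.IsHomogeneousElem 𝒜 r ∧
    (r ∈ locallyZeroIdeal F ∨ r ∈ locallyZeroIdeal F')}
  have hT : Ideal.span T = ⊤ := span_eq_top_of_forall_mem_gMax (fun r hr => hr.1) fun M hM => by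
    by_cases hMF : M ∈ F
    · obtain ⟨b, hb, hbF'⟩ :=
        exists_notMem_mem_locallyZeroIdeal hGel hF' hM (hd.notMem_of_mem_left hMF)
      exact ⟨b, ⟨hb.1, Or.inr hbF'⟩, hb.2⟩
    · obtain ⟨b, hb, hbF⟩ := exists_notMem_mem_locallyZeroIdeal hGel hF hM hMF
      exact ⟨b, ⟨hb.1, Or.inl hbF⟩, hb.2⟩
  exact eq_top_iff.2 (hT ▸ Ideal.span_le.2 fun r hr =>
    hr.2.elim (Ideal.mem_sup_left ·) (Ideal.mem_sup_right ·))

end GSpec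

section Statements

variable {G : Type*} [AddGroup G] [DecidableEq G] {R : Type*} [CommRing R]
variable (𝒜 : G → AddSubgroup R) [GradedRing 𝒜]

theorem stmt_9 : IsGelfandGraded 𝒜 ↔
    ∀ F F' : Set (GSpec 𝒜), IsClosed F → IsClosed F' → Disjoint F F' →
      ∃ r : R, (∀ P ∈ F, ∃ a : R, SetLike.IsHomogeneousElem 𝒜 a ∧ a ∉ P.1 ∧ r * a = 0) ∧
        ∀ P ∈ F', ∃ b : R, SetLike.IsHomogeneousElem 𝒜 b ∧ b ∉ P.1 ∧ (r - 1) * b = 0 := by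
  refine ⟨fun hGel F F' hF hF' hd => ?_, fun hsep P hP => ?_⟩
  · obtain ⟨y, hy, x, hx, hyx⟩ := Submodule.mem_sup.1 <|
      (GSpec.locallyZeroIdeal_sup_eq_top hGel hF hF' hd).symm ▸ Submodule.mem_top (x := (1 : R))
    have hy1 : y - 1 = -x := by rw [← hyx]; ring
    exact ⟨y, GSpec.mem_locallyZeroIdeal.1 hy,
      GSpec.mem_locallyZeroIdeal.1 (hy1 ▸ neg_mem hx)⟩
  · obtain ⟨M, hM, hPM⟩ := exists_isGradedMaximal_le hP.1 hP.2.1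
    refine ⟨M, ⟨hM, hPM⟩, fun N ⟨hN, hPN⟩ => by_contra fun hNM => ?_⟩
    obtain ⟨r, hr, hr1⟩ := hsep {⟨N, hN.isGradedPrime⟩} {⟨M, hM.isGradedPrime⟩}
      (GSpec.isClosed_singleton_of_mem_gMax hN) (GSpec.isClosed_singleton_of_mem_gMax hM)
      (Set.disjoint_singleton.2 fun h => hNM (congrArg Subtype.val h))
    obtain ⟨a, ha, haN, hra⟩ := hr _ rfl
    obtain ⟨b, hb, hbM, hrb⟩ := hr1 _ rfl
    have hab : a * b = 0 := by linear_combination b * hra - a * hrb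
    exact (hP.2.2 a b ha hb (hab ▸ P.zero_mem)).elim (fun h => haN (hPN h))
      fun h => hbM (hPM h)
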